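/- Let q and q* be the forward and backward quantities for a fixed response sequence y. Then for every t with 1 ≤ t ≤ T−1 and all latent states u, v ∈ Fin k, q(t−1, u) · π^{(t)}(u, v) · φ^{(t)}(y t, v) · q*(t, v) equals the sum of w(ū) over all full latent paths ū : Fin T → Fin k with ū(t−1) = u and ū(t) = v. Consequently Σ_{u,v ∈ Fin k} q(t−1, u) · π^{(t)}(u, v) · φ^{(t)}(y t, v) · q*(t, v) = f(y), so when f(y) > 0 the posterior pairwise quantities r^{(t)}(u,v) = q(t−1,u) π^{(t)}(u,v) φ^{(t)}(y t, v) q*(t,v) / f(y) sum to 1 over (u, v). -/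

import Mathlib

/-!
Latent Markov model with `k ≥ 1` latent states, `l ≥ 1` response categories and
`T + 1 ≥ 1` time occasions (occasions are indexed by `0, …, T`, so that the last
occasion, written `T − 1` in the paper for `T` occasions, is here `T`).
-/

/-- Extension of a partial latent path `ub : {0,…,t} → Fin k` to all of `ℕ`;
for `s ≤ t` it returns `ub s`. -/
def extPath {k t : ℕ} (u : Fin (t + 1) → Fin k) (s : ℕ) : Fin k :=
  u ⟨min s t, Nat.lt_succ_of_le (min_le_right s t)⟩

/-- The partial weight of a latent path up to occasion `t`.
For `t = T` (the last occasion) this is the full weight `w(ub)`. -/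
noncomputable def pweight {k l : ℕ} (π : Fin k → ℝ) (P : ℕ → Fin k → Fin k → ℝ)
    (Φ : ℕ → Fin l → Fin k → ℝ) (y : ℕ → Fin l) (t : ℕ) (u : ℕ → Fin k) : ℝ :=
  π (u 0) * (∏ s ∈ Finset.Icc 1 t, P s (u (s - 1)) (u s)) *
    ∏ s ∈ Finset.range (t + 1), Φ s (y s) (u s)

/-!
Split a full path at occasions `s` and `s + 1`. By the forward recursion, the heads
`(ub 0, …, ub s)` ending in `u` have total weight `q s u`. By downward induction with the
backward recursion, the paths extending a fixed head `a = (ub 0, …, ub (s + 1))` have total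
weight `pweight (s + 1) a · q*(s + 1, ub (s + 1))`. Multiplying out gives the pairwise identity,
and summing it over `(u, v)` recovers `f(y)`.
-/

open Finset

namespace Fin

theorem take_succ_eq_snoc_iff {α : Type*} {n m : ℕ} (h : m < n) (c : Fin n → α)
    (a : Fin m → α) (w : α) :
    take (m + 1) h c = snoc a w ↔ take m h.le c = a ∧ c ⟨m, h⟩ = w := by
  rw [take_succ_eq_snoc, snoc_inj]

theorem sum_univ_fun_snoc {β M : Type*} [Fintype β] [AddCommMonoid M] {n : ℕ}
    (f : (Fin (n + 1) → β) → M) : ∑ a, f a = ∑ w, ∑ b : Fin n → β, f (snoc b w) := by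
  rw [← (snocEquiv fun _ => β).sum_comp, Fintype.sum_prod_type]
  rfl

end Fin

section extPath

variable {k t : ℕ}

theorem extPath_of_le (a : Fin (t + 1) → Fin k) {s : ℕ} (h : s ≤ t) :
    extPath a s = a ⟨s, Nat.lt_succ_of_le h⟩ := by
  simp [extPath, min_eq_left h]

theorem extPath_self (a : Fin (t + 1) → Fin k) : extPath a t = a (Fin.last t) :=
  extPath_of_le a le_rfl

theorem extPath_snoc_of_le (a : Fin (t + 1) → Fin k) (w : Fin k) {s : ℕ} (h : s ≤ t) :
    extPath (Fin.snoc a w : Fin (t + 2) → Fin k) s = extPath a s := by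
  rw [extPath_of_le _ (Nat.le_succ_of_le h), extPath_of_le a h]
  exact Fin.snoc_castSucc (α := fun _ => Fin k) w a ⟨s, Nat.lt_succ_of_le h⟩

theorem extPath_snoc_self (a : Fin (t + 1) → Fin k) (w : Fin k) :
    extPath (Fin.snoc a w : Fin (t + 2) → Fin k) (t + 1) = w := by
  rw [extPath_self]
  exact Fin.snoc_last (α := fun _ => Fin k) ..

end extPath

section pweight

variable {k l : ℕ} (π : Fin k → ℝ) (P : ℕ → Fin k → Fin k → ℝ)
  (Φ : ℕ → Fin l → Fin k → ℝ) (y : ℕ → Fin l)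

theorem pweight_congr {t : ℕ} {u u' : ℕ → Fin k} (h : ∀ s ≤ t, u s = u' s) :
    pweight π P Φ y t u = pweight π P Φ y t u' := by
  have hP : ∏ s ∈ Icc 1 t, P s (u (s - 1)) (u s) = ∏ s ∈ Icc 1 t, P s (u' (s - 1)) (u' s) :=
    prod_congr rfl fun s hs => by
      rw [mem_Icc] at hs
      rw [h s hs.2, h (s - 1) (by omega)]
  have hΦ :
      ∏ s ∈ range (t + 1), Φ s (y s) (u s) = ∏ s ∈ range (t + 1), Φ s (y s) (u' s) :=
    prod_congr rfl fun s hs => by rw [h s (Nat.lt_succ_iff.mp (mem_range.mp hs))]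
  rw [pweight, pweight, h 0 t.zero_le, hP, hΦ]

theorem pweight_succ (t : ℕ) (u : ℕ → Fin k) :
    pweight π P Φ y (t + 1) u =
      pweight π P Φ y t u *
        (P (t + 1) (u t) (u (t + 1)) * Φ (t + 1) (y (t + 1)) (u (t + 1))) := by
  simp only [pweight, prod_Icc_succ_top (Nat.le_add_left 1 t), prod_range_succ, Nat.add_sub_cancel]
  ring

theorem pweight_extPath_snoc {t : ℕ} (a : Fin (t + 1) → Fin k) (w : Fin k) :
    pweight π P Φ y (t + 1) (extPath (Fin.snoc a w : Fin (t + 2) → Fin k)) =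
      pweight π P Φ y t (extPath a) *
        (P (t + 1) (a (Fin.last t)) w * Φ (t + 1) (y (t + 1)) w) := by
  rw [pweight_succ, pweight_congr π P Φ y fun s hs => extPath_snoc_of_le a w hs,
    extPath_snoc_of_le a w le_rfl, extPath_snoc_self, extPath_self]

end pweight

section ForwardBackward

variable {k l T : ℕ} {π : Fin k → ℝ} {P : ℕ → Fin k → Fin k → ℝ}
  {Φ : ℕ → Fin l → Fin k → ℝ} {y : ℕ → Fin l}

theorem forward_eq_sum_pweight {q : ℕ → Fin k → ℝ}
    (hq0 : ∀ u, q 0 u = π u * Φ 0 (y 0) u)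
    (hqrec : ∀ t, 1 ≤ t → t ≤ T → ∀ v,
      q t v = (∑ u, q (t - 1) u * P t u v) * Φ t (y t) v) {t : ℕ} (ht : t ≤ T) (u : Fin k) :
    q t u = ∑ b : Fin t → Fin k,
      pweight π P Φ y t (extPath (Fin.snoc b u : Fin (t + 1) → Fin k)) := by
  induction t generalizing u with
  | zero => simp [hq0, pweight, extPath, Fin.snoc]
  | succ t ih =>
    rw [hqrec (t + 1) t.succ_pos ht, Nat.add_sub_cancel, sum_mul, Fin.sum_univ_fun_snoc]
    refine sum_congr rfl fun w _ => ?_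
    simp only [ih (Nat.le_of_succ_le ht) w, sum_mul, mul_assoc, pweight_extPath_snoc]
    simp [Fin.snoc_last]

theorem sum_pweight_of_take_eq {qs : ℕ → Fin k → ℝ} (hqsT : ∀ u, qs T u = 1)
    (hqsrec : ∀ t < T, ∀ u,
      qs t u = ∑ v, P (t + 1) u v * Φ (t + 1) (y (t + 1)) v * qs (t + 1) v)
    {t : ℕ} (ht : t ≤ T) (a : Fin (t + 1) → Fin k) :
    ∑ c ∈ univ.filter (fun c : Fin (T + 1) → Fin k => Fin.take (t + 1) (by omega) c = a),
      pweight π P Φ y T (extPath c) =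
      pweight π P Φ y t (extPath a) * qs t (a (Fin.last t)) := by
  induction ht using Nat.decreasingInduction with
  | self => simp [hqsT, filter_eq']
  | of_succ t ht ih =>
    have hfiber : ∀ w, (univ.filter fun c : Fin (T + 1) → Fin k =>
        Fin.take (t + 1) (by omega) c = a ∧ c ⟨t + 1, by omega⟩ = w) =
        univ.filter fun c => Fin.take (t + 2) (by omega) c = Fin.snoc a w := fun w =>
      filter_congr fun c _ => (Fin.take_succ_eq_snoc_iff _ c a w).symm
    rw [← sum_fiberwise _ (fun c : Fin (T + 1) → Fin k => c ⟨t + 1, by omega⟩), hqsrec t ht,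
      mul_sum]
    refine sum_congr rfl fun w _ => ?_
    rw [filter_filter, hfiber, ih, pweight_extPath_snoc, Fin.snoc_last]
    ring

theorem sum_pweight_of_extPath_eq_and_eq {q qs : ℕ → Fin k → ℝ}
    (hq0 : ∀ u, q 0 u = π u * Φ 0 (y 0) u)
    (hqrec : ∀ t, 1 ≤ t → t ≤ T → ∀ v,
      q t v = (∑ u, q (t - 1) u * P t u v) * Φ t (y t) v)
    (hqsT : ∀ u, qs T u = 1)
    (hqsrec : ∀ t < T, ∀ u,
      qs t u = ∑ v, P (t + 1) u v * Φ (t + 1) (y (t + 1)) v * qs (t + 1) v)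
    {s : ℕ} (hs : s + 1 ≤ T) (u v : Fin k) :
    ∑ c ∈ univ.filter
        (fun c : Fin (T + 1) → Fin k => extPath c s = u ∧ extPath c (s + 1) = v),
        pweight π P Φ y T (extPath c) =
      q s u * P (s + 1) u v * Φ (s + 1) (y (s + 1)) v * qs (s + 1) v := by
  have hfiber : ∀ b : Fin s → Fin k, (univ.filter fun c : Fin (T + 1) → Fin k =>
      (extPath c s = u ∧ extPath c (s + 1) = v) ∧ Fin.take s (by omega) c = b) =
      univ.filter fun c => Fin.take (s + 2) (by omega) c = Fin.snoc (Fin.snoc b u) v :=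
    fun b => filter_congr fun c _ => by
      rw [Fin.take_succ_eq_snoc_iff, Fin.take_succ_eq_snoc_iff, extPath_of_le c (by omega),
        extPath_of_le c hs]
      tauto
  rw [← sum_fiberwise _ (Fin.take s (by omega)),
    forward_eq_sum_pweight hq0 hqrec (Nat.le_of_succ_le hs), sum_mul, sum_mul, sum_mul]
  refine sum_congr rfl fun b _ => ?_
  rw [filter_filter, hfiber, sum_pweight_of_take_eq hqsT hqsrec hs, pweight_extPath_snoc,
    Fin.snoc_last, Fin.snoc_last]
  ring

end ForwardBackward

theorem forward_backward_pairwise_general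
    (k l T : ℕ)
    (π : Fin k → ℝ) (P : ℕ → Fin k → Fin k → ℝ) (Φ : ℕ → Fin l → Fin k → ℝ)
    (y : ℕ → Fin l) (q qs : ℕ → Fin k → ℝ)
    (hq0 : ∀ u, q 0 u = π u * Φ 0 (y 0) u)
    (hqrec : ∀ t, 1 ≤ t → t ≤ T → ∀ v,
      q t v = (∑ u, q (t - 1) u * P t u v) * Φ t (y t) v)
    (hqsT : ∀ u, qs T u = 1)
    (hqsrec : ∀ t < T, ∀ u,
      qs t u = ∑ v, P (t + 1) u v * Φ (t + 1) (y (t + 1)) v * qs (t + 1) v) :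
    ∀ t, 1 ≤ t → t ≤ T →
      (∀ u v : Fin k,
        q (t - 1) u * P t u v * Φ t (y t) v * qs t v =
          ∑ ub ∈ Finset.univ.filter
              (fun ub : Fin (T + 1) → Fin k => extPath ub (t - 1) = u ∧ extPath ub t = v),
            pweight π P Φ y T (extPath ub)) ∧
      (∑ u : Fin k, ∑ v : Fin k, q (t - 1) u * P t u v * Φ t (y t) v * qs t v =
        ∑ ub : Fin (T + 1) → Fin k, pweight π P Φ y T (extPath ub)) ∧
      (0 < (∑ ub : Fin (T + 1) → Fin k, pweight π P Φ y T (extPath ub)) →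
        ∑ u : Fin k, ∑ v : Fin k,
          q (t - 1) u * P t u v * Φ t (y t) v * qs t v /
            (∑ ub : Fin (T + 1) → Fin k, pweight π P Φ y T (extPath ub)) = 1) := by
  intro t ht1 htT
  obtain ⟨s, rfl⟩ : ∃ s, t = s + 1 := ⟨t - 1, by omega⟩
  rw [Nat.add_sub_cancel]
  have pairwise : ∀ u v : Fin k, q s u * P (s + 1) u v * Φ (s + 1) (y (s + 1)) v * qs (s + 1) v =
      ∑ ub ∈ univ.filter
          fun ub : Fin (T + 1) → Fin k => extPath ub s = u ∧ extPath ub (s + 1) = v,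
        pweight π P Φ y T (extPath ub) := fun u v =>
    (sum_pweight_of_extPath_eq_and_eq hq0 hqrec hqsT hqsrec htT u v).symm
  have total : ∑ u : Fin k, ∑ v : Fin k,
      q s u * P (s + 1) u v * Φ (s + 1) (y (s + 1)) v * qs (s + 1) v =
      ∑ ub : Fin (T + 1) → Fin k, pweight π P Φ y T (extPath ub) := by
    simp only [pairwise, ← filter_filter, sum_fiberwise]
  refine ⟨pairwise, total, fun hpos => ?_⟩
  simp only [← sum_div, total, div_self hpos.ne']

/-- For `1 ≤ t ≤ T` and latent states `u, v`:
`q(t−1,u)·π⁽ᵗ⁾(u,v)·φ⁽ᵗ⁾(y t,v)·q*(t,v)` equals the sum of `w(ub)` over all full latent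
paths with `ub (t−1) = u` and `ub t = v`; consequently the double sum over `(u,v)`
equals `f(y)`, and when `f(y) > 0` the posterior pairwise quantities
`r⁽ᵗ⁾(u,v)` sum to 1 over `(u, v)`. -/
theorem forward_backward_pairwise
    (k l T : ℕ) (hk : 1 ≤ k) (hl : 1 ≤ l)
    (π : Fin k → ℝ) (P : ℕ → Fin k → Fin k → ℝ) (Φ : ℕ → Fin l → Fin k → ℝ)
    (y : ℕ → Fin l) (q qs : ℕ → Fin k → ℝ)
    (hq0 : ∀ u, q 0 u = π u * Φ 0 (y 0) u)
    (hqrec : ∀ t, 1 ≤ t → t ≤ T → ∀ v,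
      q t v = (∑ u, q (t - 1) u * P t u v) * Φ t (y t) v)
    (hqsT : ∀ u, qs T u = 1)
    (hqsrec : ∀ t < T, ∀ u,
      qs t u = ∑ v, P (t + 1) u v * Φ (t + 1) (y (t + 1)) v * qs (t + 1) v) :
    ∀ t, 1 ≤ t → t ≤ T →
      (∀ u v : Fin k,
        q (t - 1) u * P t u v * Φ t (y t) v * qs t v =
          ∑ ub ∈ Finset.univ.filter
              (fun ub : Fin (T + 1) → Fin k => extPath ub (t - 1) = u ∧ extPath ub t = v),
            pweight π P Φ y T (extPath ub)) ∧
      (∑ u : Fin k, ∑ v : Fin k, q (t - 1) u * P t u v * Φ t (y t) v * qs t v =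
        ∑ ub : Fin (T + 1) → Fin k, pweight π P Φ y T (extPath ub)) ∧
      (0 < (∑ ub : Fin (T + 1) → Fin k, pweight π P Φ y T (extPath ub)) →
        ∑ u : Fin k, ∑ v : Fin k,
          q (t - 1) u * P t u v * Φ t (y t) v * qs t v /
            (∑ ub : Fin (T + 1) → Fin k, pweight π P Φ y T (extPath ub)) = 1) :=
  forward_backward_pairwise_general k l T π P Φ y q qs hq0 hqrec hqsT hqsrec
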